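/- A Halin graph minus one cycle edge has an {L}-representation. Precisely: let T be a finite tree whose leaves are enumerated v_1,…,v_k with k ≥ 3, let r be the unique neighbor of v_k in T, and assume the enumeration is T-planar with respect to r (for every vertex u ≠ r of T, the set {i : u lies on the path in T from v_i to r} is a set of consecutive integers). Let G' be the graph obtained from T by adding the path edges v_i v_{i+1} for 1 ≤ i < k (but not the edge v_k v_1). Then there is an assignment v ↦ c(v) of an L-shape to each vertex of G' such that for all distinct vertices u, v: c(u) ∩ c(v) ≠ ∅ if and only if u and v are adjacent in G', and c(u) ∩ c(v) contains at most one point. -/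
import Mathlib

set_option maxHeartbeats 1000000

/-- An L-shape: a corner at `(x, y)` with one arm extending upward and one arm
extending rightward. -/
def LShape (x y a b : ℝ) : Set (ℝ × ℝ) :=
  ({x} : Set ℝ) ×ˢ Set.Icc y (y + a) ∪ Set.Icc x (x + b) ×ˢ ({y} : Set ℝ)

def IsLShape (c : Set (ℝ × ℝ)) : Prop :=
  ∃ x y a b : ℝ, 0 < a ∧ 0 < b ∧ c = LShape x y a b

/-- `u` lies on the (unique) path in `T` from `x` to `r`. -/
def OnPath {V : Type*} (T : SimpleGraph V) (u x r : V) : Prop :=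
  ∀ p : T.Walk x r, p.IsPath → u ∈ p.support

lemma mem_LShape {p : ℝ × ℝ} {x y a b : ℝ} :
    p ∈ LShape x y a b ↔
      (p.1 = x ∧ y ≤ p.2 ∧ p.2 ≤ y + a) ∨ (x ≤ p.1 ∧ p.1 ≤ x + b ∧ p.2 = y) := by
  constructor
  · rintro (⟨h1, h2⟩ | ⟨h1, h2⟩)
    · exact Or.inl ⟨h1, by simpa using h2⟩
    · exact Or.inr ⟨(Set.mem_Icc.mp h1).1, (Set.mem_Icc.mp h1).2, by simpa using h2⟩
  · rintro (⟨h1, h2, h3⟩ | ⟨h1, h2, h3⟩)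
    · exact Or.inl ⟨h1, Set.mem_Icc.mpr ⟨h2, h3⟩⟩
    · exact Or.inr ⟨Set.mem_Icc.mpr ⟨h1, h2⟩, h3⟩


namespace HalinAux
set_option linter.unusedSectionVars false

open SimpleGraph Walk

variable {V : Type*} [DecidableEq V] {T : SimpleGraph V}

/-- The unique path between two vertices of a tree. -/
noncomputable def thePath (hT : T.IsTree) (x y : V) : T.Walk x y :=
  (hT.existsUnique_path x y).exists.choose

lemma thePath_isPath (hT : T.IsTree) (x y : V) : (thePath hT x y).IsPath :=
  (hT.existsUnique_path x y).exists.choose_spec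

lemma path_eq (hT : T.IsTree) {x y : V} (p : T.Walk x y) (hp : p.IsPath) :
    p = thePath hT x y := by
  have h := hT.IsAcyclic.path_unique ⟨p, hp⟩ ⟨thePath hT x y, thePath_isPath hT x y⟩
  exact congrArg Subtype.val h

lemma path_length (hT : T.IsTree) {x y : V} (p : T.Walk x y) (hp : p.IsPath) :
    p.length = T.dist x y := by
  refine le_antisymm ?_ (dist_le p)
  obtain ⟨q, hq⟩ := hT.isConnected.exists_walk_length_eq_dist x y
  calc p.length = q.bypass.length := by rw [path_eq hT q.bypass q.bypass_isPath, path_eq hT p hp]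
    _ ≤ q.length := q.length_bypass_le
    _ = T.dist x y := hq

lemma dist_add (hT : T.IsTree) {x y w : V} (p : T.Walk x y) (hp : p.IsPath)
    (hw : w ∈ p.support) : T.dist x y = T.dist x w + T.dist w y := by
  rw [← path_length hT p hp, ← path_length hT (p.takeUntil w hw) (hp.takeUntil hw),
    ← path_length hT (p.dropUntil w hw) (hp.dropUntil hw), ← Walk.length_append,
    Walk.take_spec p hw]

lemma support_thePath_trans (hT : T.IsTree) {x y w : V}
    (hw : w ∈ (thePath hT x y).support) :
    (thePath hT w y).support ⊆ (thePath hT x y).support := by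
  have h : (thePath hT x y).dropUntil w hw = thePath hT w y :=
    path_eq hT _ ((thePath_isPath hT x y).dropUntil hw)
  rw [← h]
  exact Walk.support_dropUntil_subset _ hw

lemma onPath_iff (hT : T.IsTree) {u x r : V} :
    OnPath T u x r ↔ u ∈ (thePath hT x r).support := by
  constructor
  · exact fun h => h _ (thePath_isPath hT x r)
  · intro h p hp
    rwa [path_eq hT p hp]

/-- two vertices on a common path with the same distance to the endpoint agree -/
lemma eq_of_dist_eq (hT : T.IsTree) {x y u w : V} (p : T.Walk x y) (hp : p.IsPath)
    (hu : u ∈ p.support) (hw : w ∈ p.support) (hd : T.dist u y = T.dist w y) :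
    u = w := by
  have hxy := dist_add hT p hp hu
  have hxy' := dist_add hT p hp hw
  have hmem : w ∈ (p.takeUntil u hu).support ∨ w ∈ (p.dropUntil u hu).support := by
    have := Walk.take_spec p hu
    rw [← this, Walk.support_append, List.mem_append] at hw
    rcases hw with h | h
    · exact Or.inl h
    · exact Or.inr (List.mem_of_mem_tail h)
  rcases hmem with h | h
  · have h1 := dist_add hT _ (hp.takeUntil hu) h
    have h2 := dist_add hT _ ((hp.takeUntil hu).dropUntil h) (Walk.end_mem_support _)
    -- dist x u = dist x w + dist w u
    have h3 : T.dist w u = 0 := by omega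
    have := (hT.isConnected w u).dist_eq_zero_iff.mp h3
    exact this.symm
  · have h1 := dist_add hT _ (hp.dropUntil hu) h
    have h3 : T.dist u w = 0 := by omega
    exact (hT.isConnected u w).dist_eq_zero_iff.mp h3

lemma parent_spec (hT : T.IsTree) {u r : V} (h : u ≠ r) :
    ∃ w, T.Adj u w ∧ T.dist w r + 1 = T.dist u r ∧ w ∈ (thePath hT u r).support := by
  obtain ⟨w, huw, q, hq⟩ := Walk.exists_eq_cons_of_ne h (thePath hT u r)
  have hp : (Walk.cons huw q).IsPath := hq ▸ thePath_isPath hT u r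
  refine ⟨w, huw, ?_, ?_⟩
  · have h1 : (Walk.cons huw q).length = T.dist u r := by
      rw [← hq]; exact path_length hT _ (thePath_isPath hT u r)
    have h2 : q.length = T.dist w r := path_length hT q hp.of_cons
    rw [Walk.length_cons] at h1; omega
  · rw [hq, Walk.support_cons]
    exact List.mem_cons_of_mem _ q.start_mem_support

/-- The parent of a vertex (towards `r`). Junk if `u = r`. -/
noncomputable def par (hT : T.IsTree) (r u : V) : V :=
  if h : u = r then u else (parent_spec hT h).choose

lemma par_adj (hT : T.IsTree) {r u : V} (h : u ≠ r) : T.Adj u (par hT r u) := by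
  rw [par, dif_neg h]; exact (parent_spec hT h).choose_spec.1

lemma par_dist (hT : T.IsTree) {r u : V} (h : u ≠ r) :
    T.dist (par hT r u) r + 1 = T.dist u r := by
  rw [par, dif_neg h]; exact (parent_spec hT h).choose_spec.2.1

lemma par_mem (hT : T.IsTree) {r u : V} (h : u ≠ r) :
    par hT r u ∈ (thePath hT u r).support := by
  rw [par, dif_neg h]; exact (parent_spec hT h).choose_spec.2.2

/-- the parent is on any path through `u` ending at `r`. -/
lemma par_mem_of_mem (hT : T.IsTree) {x u r : V} (hur : u ≠ r)
    (hu : u ∈ (thePath hT x r).support) :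
    par hT r u ∈ (thePath hT x r).support :=
  support_thePath_trans hT hu (par_mem hT hur)

/-- a non-initial vertex of a path towards `r` has a neighbor farther from `r`. -/
lemma pred_spec (hT : T.IsTree) {x u r : V} (hu : u ∈ (thePath hT x r).support)
    (hux : u ≠ x) :
    ∃ w, T.Adj u w ∧ T.dist w r = T.dist u r + 1 ∧ w ∈ (thePath hT x r).support := by
  set p := thePath hT x r with hp
  have hq : ((p.takeUntil u hu).reverse : T.Walk u x).IsPath :=
    ((thePath_isPath hT x r).takeUntil hu).reverse
  have hq' : (p.takeUntil u hu).reverse = thePath hT u x := path_eq hT _ hq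
  obtain ⟨w, huw, hw1, hw2⟩ := parent_spec hT hux
  refine ⟨w, huw, ?_, ?_⟩
  case refine_2 =>
    exact Walk.support_takeUntil_subset p hu (by
      have : w ∈ (p.takeUntil u hu).reverse.support := by
        rw [path_eq hT _ hq]; exact hw2
      rwa [Walk.support_reverse, List.mem_reverse] at this)
  -- w ∈ takeUntil support
  have hwmem : w ∈ (p.takeUntil u hu).support := by
    have : w ∈ (p.takeUntil u hu).reverse.support := by rw [hq']; exact hw2
    rwa [Walk.support_reverse, List.mem_reverse] at this
  have hwp : w ∈ p.support := Walk.support_takeUntil_subset p hu hwmem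
  have e1 : T.dist x r = T.dist x w + T.dist w r :=
    dist_add hT p (thePath_isPath hT x r) hwp
  have e2 : T.dist x r = T.dist x u + T.dist u r :=
    dist_add hT p (thePath_isPath hT x r) hu
  have c1 : T.dist x w = T.dist w x := SimpleGraph.dist_comm
  have c2 : T.dist x u = T.dist u x := SimpleGraph.dist_comm
  omega
lemma deg_one_unique [Fintype V] (T : SimpleGraph V) [DecidableRel T.Adj] {u w w' : V}
    (h : T.degree u = 1) (hw : T.Adj u w) (hw' : T.Adj u w') : w = w' := by
  obtain ⟨a, ha⟩ := Finset.card_eq_one.mp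
    (show (T.neighborFinset u).card = 1 by rwa [SimpleGraph.card_neighborFinset_eq_degree])
  have h1 : w ∈ T.neighborFinset u := (T.mem_neighborFinset u w).mpr hw
  have h2 : w' ∈ T.neighborFinset u := (T.mem_neighborFinset u w').mpr hw'
  rw [ha, Finset.mem_singleton] at h1 h2
  rw [h1, h2]

lemma dist_pos_of_ne (hT : T.IsTree) {u r : V} (h : u ≠ r) : 0 < T.dist u r :=
  (hT.isConnected u r).pos_dist_of_ne h

lemma leaf_not_interior [Fintype V] [DecidableRel T.Adj] (hT : T.IsTree) {x u r : V}
    (hdeg : T.degree u = 1) (hu : u ∈ (thePath hT x r).support)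
    (hux : u ≠ x) (hur : u ≠ r) : False := by
  obtain ⟨w, hw1, hw2, -⟩ := pred_spec hT hu hux
  have hpar := par_adj hT hur
  have hd := par_dist hT hur
  have := deg_one_unique T hdeg hw1 hpar
  subst this
  omega

lemma support_thePath_self (hT : T.IsTree) (r : V) : (thePath hT r r).support = [r] := by
  rw [← path_eq hT Walk.nil (by simp)]
  rfl

lemma adj_dist_one {u w : V} (hT : T.IsTree) (h : T.Adj u w) : T.dist u w = 1 :=
  SimpleGraph.dist_eq_one_iff_adj.mpr h

lemma adj_iff_par (hT : T.IsTree) {r u w : V} :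
    T.Adj u w ↔ (u ≠ r ∧ par hT r u = w) ∨ (w ≠ r ∧ par hT r w = u) := by
  constructor
  · intro h
    by_cases hw : w ∈ (thePath hT u r).support
    · left
      have hur : u ≠ r := by
        intro heq
        rw [heq, support_thePath_self hT r, List.mem_singleton] at hw
        exact h.ne (heq.trans hw.symm)
      refine ⟨hur, ?_⟩
      have e1 : T.dist u r = T.dist u w + T.dist w r :=
        dist_add hT _ (thePath_isPath hT u r) hw
      have e2 := adj_dist_one hT h
      have e3 := par_dist hT hur
      exact eq_of_dist_eq hT _ (thePath_isPath hT u r) (par_mem hT hur) hw (by omega)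
    · right
      have hwr : w ≠ r :=
        fun heq => hw (heq ▸ (thePath hT u r).end_mem_support)
      refine ⟨hwr, ?_⟩
      have hp : (Walk.cons h.symm (thePath hT u r)).IsPath :=
        (thePath_isPath hT u r).cons hw
      have hpe : Walk.cons h.symm (thePath hT u r) = thePath hT w r := path_eq hT _ hp
      have humem : u ∈ (thePath hT w r).support := by
        rw [← hpe, Walk.support_cons]
        exact List.mem_cons_of_mem _ (thePath hT u r).start_mem_support
      have e1 : T.dist w r = T.dist u r + 1 := by
        have := path_length hT _ hp
        rw [Walk.length_cons, path_length hT _ (thePath_isPath hT u r)] at this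
        omega
      have e3 := par_dist hT hwr
      exact eq_of_dist_eq hT _ (thePath_isPath hT w r) (par_mem hT hwr) humem (by omega)
  · rintro (⟨h1, rfl⟩ | ⟨h1, rfl⟩)
    · exact par_adj hT h1
    · exact (par_adj hT h1).symm

lemma dist_lt_card [Fintype V] (hT : T.IsTree) (u r : V) : T.dist u r < Fintype.card V := by
  rw [← path_length hT _ (thePath_isPath hT u r)]
  exact (thePath_isPath hT u r).length_lt

lemma exists_leaf_path [Fintype V] [DecidableRel T.Adj] (hT : T.IsTree) (r : V) {k : ℕ}
    (v : Fin k → V) (hk : 0 < k) (hleaves : ∀ u : V, T.degree u = 1 → ∃ i : Fin k, u = v i) :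
    ∀ u : V, ∃ i, u ∈ (thePath hT (v i) r).support := by
  suffices H : ∀ c u, Fintype.card V - T.dist u r ≤ c → ∃ i, u ∈ (thePath hT (v i) r).support by
    exact fun u => H _ u le_rfl
  intro c
  induction c with
  | zero =>
    intro u hu
    have := dist_lt_card hT u r
    omega
  | succ c ih =>
    intro u hu
    by_cases h1 : u = r
    · subst h1
      exact ⟨⟨0, hk⟩, (thePath hT _ _).end_mem_support⟩
    by_cases h2 : T.degree u = 1
    · obtain ⟨i, rfl⟩ := hleaves u h2
      exact ⟨i, (thePath hT _ r).start_mem_support⟩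
    · have hpar := par_adj hT h1
      have hparmem : par hT r u ∈ T.neighborFinset u := (T.mem_neighborFinset u _).mpr hpar
      have hcard : 1 < (T.neighborFinset u).card := by
        rcases Nat.lt_or_ge (T.neighborFinset u).card 2 with h | h
        · interval_cases hh : (T.neighborFinset u).card
          · rw [Finset.card_eq_zero] at hh
            rw [hh] at hparmem; simp at hparmem
          · exact absurd hh h2
        · exact h
      obtain ⟨w, hwmem, hwne⟩ := Finset.exists_mem_ne hcard (par hT r u)
      have hwadj : T.Adj u w := (T.mem_neighborFinset u w).mp hwmem
      have hwnotin : w ∉ (thePath hT u r).support := by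
        intro hmem
        apply hwne
        have e1 : T.dist u r = T.dist u w + T.dist w r :=
          dist_add hT _ (thePath_isPath hT u r) hmem
        have e2 := adj_dist_one hT hwadj
        have e3 := par_dist hT h1
        exact eq_of_dist_eq hT _ (thePath_isPath hT u r) hmem (par_mem hT h1) (by omega)
      have hp : (Walk.cons hwadj.symm (thePath hT u r)).IsPath :=
        (thePath_isPath hT u r).cons hwnotin
      have hpe : Walk.cons hwadj.symm (thePath hT u r) = thePath hT w r := path_eq hT _ hp
      have humem : u ∈ (thePath hT w r).support := by
        rw [← hpe, Walk.support_cons]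
        exact List.mem_cons_of_mem _ (thePath hT u r).start_mem_support
      have hdw : T.dist w r = T.dist u r + 1 := by
        have := path_length hT _ hp
        rw [Walk.length_cons, path_length hT _ (thePath_isPath hT u r)] at this
        omega
      have hdu := dist_lt_card hT u r
      obtain ⟨i, hi⟩ := ih w (by omega)
      exact ⟨i, support_thePath_trans hT hi humem⟩
end HalinAux

open HalinAux

/-- A Halin graph minus the cycle edge `v_k v_1` has an `{L}`-representation. -/
theorem halin_graph_minus_edge_has_L_representation
    {V : Type*} [Fintype V] [DecidableEq V]
    (T : SimpleGraph V) [DecidableRel T.Adj] (hT : T.IsTree)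
    (k : ℕ) (hk : 3 ≤ k)
    (v : Fin k → V) (hv : Function.Injective v)
    (hleaf : ∀ i : Fin k, T.degree (v i) = 1)
    (hleaves : ∀ u : V, T.degree u = 1 → ∃ i : Fin k, u = v i)
    (r : V) (hr : T.Adj (v ⟨k - 1, by omega⟩) r)
    -- the enumeration of the leaves is `T`-planar with respect to `r`
    (hplanar : ∀ u : V, u ≠ r → ∀ i j l : Fin k, i ≤ j → j ≤ l →
      OnPath T u (v i) r → OnPath T u (v l) r → OnPath T u (v j) r)
    (G' : SimpleGraph V)
    (hG' : G' = T ⊔ SimpleGraph.fromEdgeSet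
      {e | ∃ (i : Fin k) (h : (i : ℕ) + 1 < k), e = s(v i, v ⟨(i : ℕ) + 1, h⟩)}) :
    ∃ c : V → Set (ℝ × ℝ),
      (∀ u : V, IsLShape (c u)) ∧
      ∀ u u' : V, u ≠ u' →
        (((c u ∩ c u').Nonempty ↔ G'.Adj u u') ∧ (c u ∩ c u').Subsingleton) := by
  classical
  subst hG'
  set n := Fintype.card V with hn
  have hnk : k ≤ n := by
    have := Fintype.card_le_of_injective v hv
    simpa using this
  set d : V → ℕ := fun u => T.dist u r with hd
  -- the set of leaf indices below a vertex
  set J : V → Finset (Fin k) := fun u =>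
    Finset.univ.filter (fun i => u ∈ (thePath hT (v i) r).support) with hJ
  have hmemJ : ∀ u (i : Fin k), i ∈ J u ↔ u ∈ (thePath hT (v i) r).support := by
    intro u i; simp [hJ]
  have hJne : ∀ u, (J u).Nonempty := by
    intro u
    obtain ⟨i, hi⟩ := exists_leaf_path hT r v (by omega) hleaves u
    exact ⟨i, (hmemJ u i).mpr hi⟩
  set lo : V → Fin k := fun u => (J u).min' (hJne u) with hlo
  set hi : V → Fin k := fun u => (J u).max' (hJne u) with hhi
  have hlo_mem : ∀ u, lo u ∈ J u := fun u => (J u).min'_mem (hJne u)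
  have hhi_mem : ∀ u, hi u ∈ J u := fun u => (J u).max'_mem (hJne u)
  have hlo_le : ∀ u, ∀ i ∈ J u, lo u ≤ i := fun u i hiu => (J u).min'_le i hiu
  have hle_hi : ∀ u, ∀ i ∈ J u, i ≤ hi u := fun u i hiu => (J u).le_max' i hiu
  have hinterval : ∀ u (i : Fin k), lo u ≤ i → i ≤ hi u → i ∈ J u := by
    intro u i h1 h2
    by_cases hur : u = r
    · subst hur
      exact (hmemJ u i).mpr (thePath hT (v i) u).end_mem_support
    · have := hplanar u hur (lo u) i (hi u) h1 h2
        ((onPath_iff hT).mpr ((hmemJ u _).mp (hlo_mem u)))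
        ((onPath_iff hT).mpr ((hmemJ u _).mp (hhi_mem u)))
      exact (hmemJ u i).mpr ((onPath_iff hT).mp this)
  -- r is not a leaf
  have hnotr : ∀ i : Fin k, v i ≠ r := by
    intro i hir
    set K : Fin k := ⟨k - 1, by omega⟩ with hK
    have hiK : i ≠ K := by
      intro h
      exact hr.ne (by rw [← hir, h])
    obtain ⟨j, hji, hjK⟩ : ∃ j : Fin k, j ≠ i ∧ j ≠ K := by
      by_contra hcon
      push_neg at hcon
      have hsub : (Finset.univ : Finset (Fin k)) ⊆ {i, K} := by
        intro j _
        by_cases h : j = i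
        · simp [h]
        · simp [hcon j h]
      have h1 := Finset.card_le_card hsub
      have h2 : ({i, K} : Finset (Fin k)).card ≤ 2 :=
        le_trans (Finset.card_insert_le _ _) (by simp)
      rw [Finset.card_univ, Fintype.card_fin] at h1
      omega
    have hvj_ne_r : v j ≠ r := fun h => hji (hv (h.trans hir.symm))
    obtain ⟨w, hadjw, hdw, hwmem⟩ := pred_spec hT
      (show r ∈ (thePath hT (v j) r).support from (thePath hT (v j) r).end_mem_support)
      (Ne.symm hvj_ne_r)
    have hdeg_r : T.degree r = 1 := hir ▸ hleaf i
    have hwK : w = v K := deg_one_unique T hdeg_r hadjw hr.symm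
    have h1 : w ≠ v j := by
      rw [hwK]
      exact fun h => hjK (hv h).symm
    exact leaf_not_interior hT (hwK ▸ hleaf K) hwmem h1 hadjw.ne'
  have hJleaf : ∀ i : Fin k, J (v i) = {i} := by
    intro i
    ext j
    simp only [Finset.mem_singleton]
    rw [hmemJ]
    constructor
    · intro hmem
      by_contra hji
      have h1 : v i ≠ v j := fun h => hji ((hv h).symm)
      exact leaf_not_interior hT (hleaf i) hmem h1 (hnotr i)
    · rintro rfl
      exact (thePath hT (v j) r).start_mem_support
  have hlo_leaf : ∀ i : Fin k, lo (v i) = i := by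
    intro i; rw [hlo]; simp only [hJleaf i]; exact Finset.min'_singleton i
  have hhi_leaf : ∀ i : Fin k, hi (v i) = i := by
    intro i; rw [hhi]; simp only [hJleaf i]; exact Finset.max'_singleton i
  have hcomp : ∀ u w (i : Fin k), i ∈ J u → i ∈ J w → d u = d w → u = w := by
    intro u w i hu hw hdd
    exact eq_of_dist_eq hT _ (thePath_isPath hT (v i) r)
      ((hmemJ u i).mp hu) ((hmemJ w i).mp hw) hdd
  have hJpar : ∀ u, u ≠ r → ∀ i ∈ J u, i ∈ J (par hT r u) := by
    intro u hur i hiu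
    exact (hmemJ _ i).mpr (par_mem_of_mem hT hur ((hmemJ u i).mp hiu))
  have hd_par : ∀ u, u ≠ r → d (par hT r u) + 1 = d u := fun u hur => par_dist hT hur
  have hdlt : ∀ u, d u < n := fun u => dist_lt_card hT u r
  have hd0 : ∀ u, d u = 0 ↔ u = r := fun u => (hT.isConnected u r).dist_eq_zero_iff
  have hdleaf : ∀ i : Fin k, 1 ≤ d (v i) := by
    intro i
    have h1 : d (v i) ≠ 0 := fun h => hnotr i ((hd0 _).mp h)
    omega
  have hparnotleaf : ∀ u (m : Fin k), u ≠ r → par hT r u ≠ v m := by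
    intro u m hur heq
    have hadj1 : T.Adj u (par hT r u) := par_adj hT hur
    have hd1 := hd_par u hur
    rw [heq] at hd1 hadj1
    have hmr : v m ≠ r := hnotr m
    have hadj2 : T.Adj (v m) (par hT r (v m)) := par_adj hT hmr
    have hd2 := hd_par (v m) hmr
    have heq2 : u = par hT r (v m) := deg_one_unique T (hleaf m) hadj1.symm hadj2
    rw [← heq2] at hd2
    omega
  -- the geometric data
  set δ : ℝ := 1 / ((n : ℝ) + 1) with hδ
  have hδpos : 0 < δ := by rw [hδ]; positivity
  have hmul : ∀ m : ℕ, m ≤ n → (m : ℝ) * δ < 1 := by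
    intro m hm
    rw [hδ, mul_one_div, div_lt_one (by positivity)]
    have : (m : ℝ) ≤ (n : ℝ) := by exact_mod_cast hm
    linarith
  have hmul0 : ∀ m : ℕ, 0 ≤ (m : ℝ) * δ := fun m => by positivity
  set X : V → ℝ := fun u => ((lo u : ℕ) : ℝ) + (d u : ℝ) * δ with hX
  set Y : V → ℝ := fun u => if ∃ i, u = v i then -((n : ℝ) + ((lo u : ℕ) : ℝ))
    else -(d u : ℝ) with hY
  set A : V → ℝ := fun u => if ∃ i, u = v i then (n : ℝ) + ((lo u : ℕ) : ℝ) + 1 - (d u : ℝ)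
    else 1 with hA
  set B : V → ℝ := fun u => if ∃ i, u = v i then
      (if h2 : ((lo u : ℕ) + 1) < k then X (v ⟨(lo u : ℕ) + 1, h2⟩) - X u else 1/2)
    else ((hi u : ℕ) : ℝ) - ((lo u : ℕ) : ℝ) + δ with hB
  -- evaluation lemmas
  have hYleaf : ∀ i : Fin k, Y (v i) = -((n : ℝ) + ((i : ℕ) : ℝ)) := by
    intro i; simp only [hY]
    rw [if_pos (show ∃ j, v i = v j from ⟨i, rfl⟩), hlo_leaf i]
  have hYint : ∀ u, (¬ ∃ i, u = v i) → Y u = -(d u : ℝ) := by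
    intro u hu; simp only [hY]; rw [if_neg hu]
  have hAleaf : ∀ i : Fin k, A (v i) = (n : ℝ) + ((i : ℕ) : ℝ) + 1 - (d (v i) : ℝ) := by
    intro i; simp only [hA]
    rw [if_pos (show ∃ j, v i = v j from ⟨i, rfl⟩), hlo_leaf i]
  have hAint : ∀ u, (¬ ∃ i, u = v i) → A u = 1 := by
    intro u hu; simp only [hA]; rw [if_neg hu]
  have hBleaf : ∀ (j : ℕ) (hj : j + 1 < k),
      B (v ⟨j, by omega⟩) = X (v ⟨j + 1, hj⟩) - X (v ⟨j, by omega⟩) := by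
    intro j hj
    simp only [hB]
    rw [if_pos (show ∃ m, v ⟨j, by omega⟩ = v m from ⟨⟨j, by omega⟩, rfl⟩)]
    simp only [hlo_leaf]
    rw [dif_pos hj]
  have hBlast : ∀ (j : ℕ) (hj : j < k), ¬ (j + 1 < k) → B (v ⟨j, hj⟩) = 1/2 := by
    intro j hj hj2
    simp only [hB]
    rw [if_pos (show ∃ m, v ⟨j, hj⟩ = v m from ⟨⟨j, hj⟩, rfl⟩)]
    simp only [hlo_leaf]
    rw [dif_neg hj2]
  have hBint : ∀ u, (¬ ∃ i, u = v i) →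
      B u = ((hi u : ℕ) : ℝ) - ((lo u : ℕ) : ℝ) + δ := by
    intro u hu; simp only [hB]; rw [if_neg hu]
  -- X values
  have hXmono : ∀ i j : Fin k, (i : ℕ) < (j : ℕ) → X (v i) < X (v j) := by
    intro i j hij
    simp only [hX, hlo_leaf]
    have h1 : (d (v i) : ℝ) * δ < 1 := hmul _ (le_of_lt (hdlt _))
    have h2 : 0 ≤ (d (v j) : ℝ) * δ := hmul0 _
    have h3 : ((i : ℕ) : ℝ) + 1 ≤ ((j : ℕ) : ℝ) := by exact_mod_cast hij
    linarith
  have hXinj : ∀ u w, X u = X w → u = w := by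
    intro u w h
    simp only [hX] at h
    have h1 : (d u : ℝ) * δ < 1 := hmul _ (le_of_lt (hdlt u))
    have h2 : (d w : ℝ) * δ < 1 := hmul _ (le_of_lt (hdlt w))
    have g1 : 0 ≤ (d u : ℝ) * δ := hmul0 _
    have g2 : 0 ≤ (d w : ℝ) * δ := hmul0 _
    have hlolo : ((lo u : ℕ) : ℕ) = (lo w : ℕ) := by
      have c1 : ((lo u : ℕ) : ℝ) < ((lo w : ℕ) : ℝ) + 1 := by linarith
      have c2 : ((lo w : ℕ) : ℝ) < ((lo u : ℕ) : ℝ) + 1 := by linarith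
      have c1' : (lo u : ℕ) < (lo w : ℕ) + 1 := by exact_mod_cast c1
      have c2' : (lo w : ℕ) < (lo u : ℕ) + 1 := by exact_mod_cast c2
      omega
    have hdeq : d u = d w := by
      have : ((lo u : ℕ) : ℝ) = ((lo w : ℕ) : ℝ) := by exact_mod_cast hlolo
      have hm : (d u : ℝ) * δ = (d w : ℝ) * δ := by linarith
      have := mul_right_cancel₀ (ne_of_gt hδpos) hm
      exact_mod_cast this
    have hfin : lo u = lo w := Fin.ext hlolo
    exact hcomp u w (lo u) (hlo_mem u) (hfin ▸ hlo_mem w) hdeq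
  -- the VH predicate : the vertical arm of u crosses the horizontal arm of w
  set VH : V → V → Prop := fun u w =>
    X w ≤ X u ∧ X u ≤ X w + B w ∧ Y u ≤ Y w ∧ Y w ≤ Y u + A u with hVH
  have key2 : ∀ u w, u ≠ w → VH u w →
      (u ≠ r ∧ w = par hT r u) ∨
      ∃ (j : ℕ) (hj1 : j + 1 < k), w = v ⟨j, by omega⟩ ∧ u = v ⟨j + 1, hj1⟩ := by
    intro u w hne hvh
    obtain ⟨x1, x2, y1, y2⟩ := hvh
    by_cases hw : ∃ m, w = v m
    · -- w is a leaf
      obtain ⟨j, rfl⟩ := hw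
      by_cases hu : ∃ i, u = v i
      · obtain ⟨i, rfl⟩ := hu
        rw [hYleaf i, hYleaf j] at y1
        have hji : (j : ℕ) ≤ (i : ℕ) := by
          have : ((j : ℕ) : ℝ) ≤ ((i : ℕ) : ℝ) := by linarith
          exact_mod_cast this
        have hjnei : (j : ℕ) ≠ (i : ℕ) := fun h => hne (congrArg v (Fin.ext h.symm))
        have hjlt : (j : ℕ) < (i : ℕ) := by omega
        have hjk : (j : ℕ) + 1 < k := by have := i.isLt; omega
        have hb := hBleaf (j : ℕ) hjk
        have hej : (⟨(j : ℕ), by omega⟩ : Fin k) = j := Fin.ext rfl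
        rw [hej] at hb
        rw [hb] at x2
        have hieq : (i : ℕ) = (j : ℕ) + 1 := by
          by_contra hcc
          have h2 : (j : ℕ) + 1 < (i : ℕ) := by omega
          have := hXmono ⟨(j : ℕ) + 1, hjk⟩ i h2
          linarith
        exact Or.inr ⟨(j : ℕ), hjk, congrArg v hej.symm, congrArg v (Fin.ext hieq)⟩
      · rw [hYint u hu, hYleaf j] at y1
        have hdn : (d u : ℝ) < (n : ℝ) := by exact_mod_cast hdlt u
        have hj0 : (0 : ℝ) ≤ ((j : ℕ) : ℝ) := by positivity
        linarith
    · -- w is internal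
      have hYw : Y w = -(d w : ℝ) := hYint w hw
      have hBw := hBint w hw
      have hdwδ : 0 ≤ (d w : ℝ) * δ := hmul0 _
      have hdw1δ : ((d w : ℝ) + 1) * δ < 1 := by
        have h := hmul (d w + 1) (by have := hdlt w; omega)
        push_cast at h
        exact h
      by_cases hu : ∃ i, u = v i
      · -- u is a leaf
        obtain ⟨i, rfl⟩ := hu
        rw [hYleaf i, hYw] at y1
        rw [hYleaf i, hYw, hAleaf i] at y2
        have hduδ : (d (v i) : ℝ) * δ < 1 := hmul _ (le_of_lt (hdlt _))
        have hduδ0 : 0 ≤ (d (v i) : ℝ) * δ := hmul0 _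
        simp only [hX, hlo_leaf] at x1 x2
        rw [hBw] at x2
        have hup : (lo w : ℕ) ≤ (i : ℕ) := by
          have : ((lo w : ℕ) : ℝ) < ((i : ℕ) : ℝ) + 1 := by linarith
          have h2 : (lo w : ℕ) < (i : ℕ) + 1 := by exact_mod_cast this
          omega
        have hdown : (i : ℕ) ≤ (hi w : ℕ) := by
          have : ((i : ℕ) : ℝ) < ((hi w : ℕ) : ℝ) + 1 := by nlinarith
          have h2 : (i : ℕ) < (hi w : ℕ) + 1 := by exact_mod_cast this
          omega
        have hiJw : i ∈ J w := hinterval w i (Fin.le_def.mpr hup) (Fin.le_def.mpr hdown)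
        have hwmem : w ∈ (thePath hT (v i) r).support := (hmemJ w i).mp hiJw
        have hwnevi : v i ≠ w := fun h => hw ⟨i, h.symm⟩
        have hdadd : d (v i) = T.dist (v i) w + d w :=
          dist_add hT _ (thePath_isPath hT (v i) r) hwmem
        have hdpos : 0 < T.dist (v i) w := (hT.isConnected (v i) w).pos_dist_of_ne hwnevi
        have hdtop : d (v i) ≤ d w + 1 := by
          have : (d (v i) : ℝ) ≤ (d w : ℝ) + 1 := by linarith
          exact_mod_cast this
        have hdeq : d w = d (v i) - 1 := by omega
        have hur : v i ≠ r := hnotr i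
        have hiJvi : i ∈ J (v i) := (hmemJ _ i).mpr (thePath hT (v i) r).start_mem_support
        have hiJpar : i ∈ J (par hT r (v i)) := hJpar (v i) hur i hiJvi
        have hdpar := hd_par (v i) hur
        refine Or.inl ⟨hur, ?_⟩
        exact hcomp w (par hT r (v i)) i hiJw hiJpar (by omega)
      · -- u is internal
        rw [hYint u hu, hYw] at y1
        rw [hYint u hu, hYw, hAint u hu] at y2
        have hd1 : d w ≤ d u := by
          have : (d w : ℝ) ≤ (d u : ℝ) := by linarith
          exact_mod_cast this
        have hd2 : d u ≤ d w + 1 := by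
          have : (d u : ℝ) ≤ (d w : ℝ) + 1 := by linarith
          exact_mod_cast this
        have hduδ : (d u : ℝ) * δ < 1 := hmul _ (le_of_lt (hdlt _))
        have hduδ0 : 0 ≤ (d u : ℝ) * δ := hmul0 _
        simp only [hX] at x1 x2
        rw [hBw] at x2
        have hup : (lo w : ℕ) ≤ (lo u : ℕ) := by
          have : ((lo w : ℕ) : ℝ) < ((lo u : ℕ) : ℝ) + 1 := by linarith
          have h2 : (lo w : ℕ) < (lo u : ℕ) + 1 := by exact_mod_cast this
          omega
        have hdown : (lo u : ℕ) ≤ (hi w : ℕ) := by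
          have hcast : (d u : ℝ) ≤ (d w : ℝ) + 1 := by exact_mod_cast hd2
          have hcast2 : (d w : ℝ) ≤ (d u : ℝ) := by exact_mod_cast hd1
          have : ((lo u : ℕ) : ℝ) < ((hi w : ℕ) : ℝ) + 1 := by nlinarith
          have h2 : (lo u : ℕ) < (hi w : ℕ) + 1 := by exact_mod_cast this
          omega
        have hloJw : lo u ∈ J w := hinterval w (lo u) (Fin.le_def.mpr hup) (Fin.le_def.mpr hdown)
        rcases Nat.eq_or_lt_of_le hd1 with heq | hlt
        · exact absurd (hcomp u w (lo u) (hlo_mem u) hloJw heq.symm) hne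
        · have hdueq : d u = d w + 1 := by omega
          have hur : u ≠ r := by
            intro h
            have := (hd0 u).mpr h
            omega
          have hloJpar : lo u ∈ J (par hT r u) := hJpar u hur _ (hlo_mem u)
          have hdpar := hd_par u hur
          exact Or.inl ⟨hur, hcomp w (par hT r u) (lo u) hloJw hloJpar (by omega)⟩
  have hfinle : ∀ (a b : Fin k), a ≤ b → (a : ℕ) ≤ (b : ℕ) := fun a b h => h
  have key3a : ∀ u, u ≠ r → VH u (par hT r u) := by
    intro u hur
    set w := par hT r u with hw
    have hdw : d w + 1 = d u := hd_par u hur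
    have hwnotleaf : ¬ ∃ m, w = v m := by
      rintro ⟨m, hm⟩
      exact hparnotleaf u m hur hm
    have hYw : Y w = -(d w : ℝ) := hYint w hwnotleaf
    have hBw : B w = ((hi w : ℕ) : ℝ) - ((lo w : ℕ) : ℝ) + δ := hBint w hwnotleaf
    have hlomem : lo u ∈ J w := hJpar u hur _ (hlo_mem u)
    have hl1 : ((lo w : ℕ)) ≤ ((lo u : ℕ)) := hfinle _ _ (hlo_le w _ hlomem)
    have hl2 : ((lo u : ℕ)) ≤ ((hi w : ℕ)) := hfinle _ _ (hle_hi w _ hlomem)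
    have hl1' : ((lo w : ℕ) : ℝ) ≤ ((lo u : ℕ) : ℝ) := by exact_mod_cast hl1
    have hl2' : ((lo u : ℕ) : ℝ) ≤ ((hi w : ℕ) : ℝ) := by exact_mod_cast hl2
    have hcast : (d u : ℝ) = (d w : ℝ) + 1 := by exact_mod_cast hdw.symm
    have hmulc : (d u : ℝ) * δ = (d w : ℝ) * δ + δ := by rw [hcast]; ring
    have hmulle : (d w : ℝ) * δ ≤ (d u : ℝ) * δ := by linarith
    refine ⟨?_, ?_, ?_, ?_⟩
    · simp only [hX]; linarith
    · simp only [hX]; rw [hBw]; linarith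
    · by_cases hu : ∃ i, u = v i
      · obtain ⟨i, rfl⟩ := hu
        rw [hYleaf i, hYw]
        have hdn : (d w : ℝ) < (n : ℝ) := by exact_mod_cast hdlt w
        have : (0 : ℝ) ≤ ((i : ℕ) : ℝ) := by positivity
        linarith
      · rw [hYint u hu, hYw]
        have : (d w : ℝ) ≤ (d u : ℝ) := by linarith
        linarith
    · by_cases hu : ∃ i, u = v i
      · obtain ⟨i, rfl⟩ := hu
        rw [hYleaf i, hYw, hAleaf i]
        linarith
      · rw [hYint u hu, hYw, hAint u hu]
        linarith
  have key3b : ∀ (j : ℕ) (hj : j + 1 < k), VH (v ⟨j + 1, hj⟩) (v ⟨j, by omega⟩) := by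
    intro j hj
    have hXlt : X (v ⟨j, by omega⟩) < X (v ⟨j + 1, hj⟩) := hXmono _ _ (by simp)
    have hdn : (d (v ⟨j + 1, hj⟩) : ℝ) < (n : ℝ) := by exact_mod_cast hdlt _
    refine ⟨le_of_lt hXlt, ?_, ?_, ?_⟩
    · rw [hBleaf j hj]; linarith
    · rw [hYleaf, hYleaf]
      have e1 : ((⟨j + 1, hj⟩ : Fin k) : ℕ) = j + 1 := rfl
      have e2 : ((⟨j, by omega⟩ : Fin k) : ℕ) = j := rfl
      rw [e1, e2]
      push_cast
      linarith
    · rw [hYleaf, hYleaf, hAleaf]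
      have e1 : ((⟨j + 1, hj⟩ : Fin k) : ℕ) = j + 1 := rfl
      have e2 : ((⟨j, by omega⟩ : Fin k) : ℕ) = j := rfl
      rw [e1, e2]
      push_cast
      linarith
  have hδlt1 : δ < 1 := by
    have := hmul 1 (by omega)
    simpa using this
  have hHHcore : ∀ u w, u ≠ w → (¬ ∃ i, u = v i) → (¬ ∃ m, w = v m) → d u = d w →
      (hi u : ℕ) < (lo w : ℕ) → ∀ t : ℝ,
      X u ≤ t → t ≤ X u + B u → X w ≤ t → t ≤ X w + B w → False := by
    intro u w hne hu hw hdeq hlt t h1 h2 h3 h4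
    rw [hBint u hu] at h2
    simp only [hX] at h2 h3
    have hc1 : ((hi u : ℕ) : ℝ) + 1 ≤ ((lo w : ℕ) : ℝ) := by exact_mod_cast hlt
    have hdd : (d u : ℝ) = (d w : ℝ) := by exact_mod_cast hdeq
    have g2 : 0 ≤ (d w : ℝ) * δ := hmul0 _
    nlinarith [hδlt1, hδpos]
  have hHH : ∀ u w, u ≠ w → Y u = Y w → ∀ t : ℝ,
      X u ≤ t → t ≤ X u + B u → X w ≤ t → t ≤ X w + B w → False := by
    intro u w hne hYeq t h1 h2 h3 h4
    by_cases hu : ∃ i, u = v i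
    · obtain ⟨i, rfl⟩ := hu
      by_cases hw : ∃ m, w = v m
      · obtain ⟨m, rfl⟩ := hw
        rw [hYleaf i, hYleaf m] at hYeq
        have he : ((i : ℕ) : ℝ) = ((m : ℕ) : ℝ) := by linarith
        have : (i : ℕ) = (m : ℕ) := by exact_mod_cast he
        exact hne (congrArg v (Fin.ext this))
      · rw [hYleaf i, hYint w hw] at hYeq
        have hdn : (d w : ℝ) < (n : ℝ) := by exact_mod_cast hdlt w
        have hi0 : (0 : ℝ) ≤ ((i : ℕ) : ℝ) := by positivity
        linarith
    · by_cases hw : ∃ m, w = v m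
      · obtain ⟨m, rfl⟩ := hw
        rw [hYint u hu, hYleaf m] at hYeq
        have hdn : (d u : ℝ) < (n : ℝ) := by exact_mod_cast hdlt u
        have hi0 : (0 : ℝ) ≤ ((m : ℕ) : ℝ) := by positivity
        linarith
      · rw [hYint u hu, hYint w hw] at hYeq
        have hdeq : d u = d w := by
          have : (d u : ℝ) = (d w : ℝ) := by linarith
          exact_mod_cast this
        have hdisj : ∀ i : Fin k, ¬(i ∈ J u ∧ i ∈ J w) := fun i ⟨a, b⟩ =>
          hne (hcomp u w i a b hdeq)
        have hcases : (hi u : ℕ) < (lo w : ℕ) ∨ (hi w : ℕ) < (lo u : ℕ) := by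
          by_contra hcc
          push_neg at hcc
          obtain ⟨hc1, hc2⟩ := hcc
          set m : Fin k := max (lo u) (lo w) with hm
          have hmJu : m ∈ J u := hinterval u m (le_max_left _ _)
            (max_le (hle_hi u _ (hlo_mem u)) (Fin.le_def.mpr hc1))
          have hmJw : m ∈ J w := hinterval w m (le_max_right _ _)
            (max_le (Fin.le_def.mpr hc2) (hle_hi w _ (hlo_mem w)))
          exact hdisj m ⟨hmJu, hmJw⟩
        rcases hcases with h | h
        · exact hHHcore u w hne hu hw hdeq h t h1 h2 h3 h4
        · exact hHHcore w u (Ne.symm hne) hw hu hdeq.symm h t h3 h4 h1 h2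
  have key1 : ∀ u w, u ≠ w → ∀ p : ℝ × ℝ,
      p ∈ LShape (X u) (Y u) (A u) (B u) → p ∈ LShape (X w) (Y w) (A w) (B w) →
      (VH u w ∧ p = (X u, Y w)) ∨ (VH w u ∧ p = (X w, Y u)) := by
    intro u w hne p hpu hpw
    rw [mem_LShape] at hpu hpw
    rcases hpu with ⟨e1, e2, e3⟩ | ⟨e1, e2, e3⟩ <;> rcases hpw with ⟨f1, f2, f3⟩ | ⟨f1, f2, f3⟩
    · exact absurd (hXinj u w (e1 ▸ f1 ▸ rfl)) hne
    · exact Or.inl ⟨⟨f1.trans_eq e1, e1 ▸ f2, by rw [← f3]; exact e2, by rw [← f3]; exact e3⟩,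
        Prod.ext e1 f3⟩
    · exact Or.inr ⟨⟨e1.trans_eq f1, f1 ▸ e2, by rw [← e3]; exact f2, by rw [← e3]; exact f3⟩,
        Prod.ext f1 e3⟩
    · exact absurd (hHH u w hne (e3 ▸ f3 ▸ rfl) p.1 e1 e2 f1 f2) not_false
  have key4 : ∀ u w, VH u w →
      (X u, Y w) ∈ LShape (X u) (Y u) (A u) (B u) ∩ LShape (X w) (Y w) (A w) (B w) := by
    intro u w ⟨h1, h2, h3, h4⟩
    constructor
    · rw [mem_LShape]; exact Or.inl ⟨rfl, h3, h4⟩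
    · rw [mem_LShape]; exact Or.inr ⟨h1, h2, rfl⟩
  have key5 : ∀ u w, u ≠ w → VH u w → VH w u → False := by
    intro u w hne h1 h2
    rcases key2 u w hne h1 with ⟨hur, he1⟩ | ⟨j, hj, he1, he2⟩ <;>
      rcases key2 w u (Ne.symm hne) h2 with ⟨hwr, hf1⟩ | ⟨j', hj', hf1, hf2⟩
    · have d1 := hd_par u hur
      have d2 := hd_par w hwr
      rw [← he1] at d1
      rw [← hf1] at d2
      omega
    · exact hparnotleaf u _ hur (he1.symm.trans hf2)
    · exact hparnotleaf w _ hwr (hf1.symm.trans he2)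
    · have g1 := hv (he2.symm.trans hf1)
      have g2 := hv (he1.symm.trans hf2)
      rw [Fin.mk.injEq] at g1 g2
      omega
  -- adjacency in G'
  have hadj : ∀ u w, (T ⊔ SimpleGraph.fromEdgeSet
      {e | ∃ (i : Fin k) (h : (i : ℕ) + 1 < k), e = s(v i, v ⟨(i : ℕ) + 1, h⟩)}).Adj u w ↔
      (T.Adj u w ∨ ((∃ (i : Fin k) (h : (i : ℕ) + 1 < k),
        s(u, w) = s(v i, v ⟨(i : ℕ) + 1, h⟩)) ∧ u ≠ w)) := by
    intro u w
    simp only [SimpleGraph.sup_adj, SimpleGraph.fromEdgeSet_adj, Set.mem_setOf_eq]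
  -- finish
  refine ⟨fun u => LShape (X u) (Y u) (A u) (B u), ?_, ?_⟩
  · intro u
    refine ⟨X u, Y u, A u, B u, ?_, ?_, rfl⟩
    · by_cases hu : ∃ i, u = v i
      · obtain ⟨i, rfl⟩ := hu
        rw [hAleaf i]
        have h1 : (d (v i) : ℝ) < (n : ℝ) := by exact_mod_cast hdlt _
        have h2 : (0 : ℝ) ≤ ((i : ℕ) : ℝ) := by positivity
        linarith
      · rw [hAint u hu]; norm_num
    · by_cases hu : ∃ i, u = v i
      · obtain ⟨i, rfl⟩ := hu
        by_cases h2 : (i : ℕ) + 1 < k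
        · have hb := hBleaf (i : ℕ) h2
          have he : (⟨(i : ℕ), by omega⟩ : Fin k) = i := Fin.ext rfl
          rw [he] at hb
          rw [hb]
          have := hXmono i ⟨(i : ℕ) + 1, h2⟩ (by simp)
          linarith
        · have hb := hBlast (i : ℕ) i.isLt h2
          have he : (⟨(i : ℕ), i.isLt⟩ : Fin k) = i := Fin.ext rfl
          rw [he] at hb
          rw [hb]; norm_num
      · rw [hBint u hu]
        have hle := hfinle _ _ (hle_hi u _ (hlo_mem u))
        have hle' : ((lo u : ℕ) : ℝ) ≤ ((hi u : ℕ) : ℝ) := by exact_mod_cast hle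
        linarith
  · intro u w hne
    constructor
    · constructor
      · rintro ⟨p, hp1, hp2⟩
        rcases key1 u w hne p hp1 hp2 with ⟨hvh, -⟩ | ⟨hvh, -⟩
        · rcases key2 u w hne hvh with ⟨hur, rfl⟩ | ⟨j, hj, rfl, rfl⟩
          · exact (hadj _ _).mpr (Or.inl (par_adj hT hur))
          · refine (hadj _ _).mpr (Or.inr ⟨⟨⟨j, by omega⟩, by simpa using hj, ?_⟩, hne⟩)
            rw [Sym2.eq_swap]
        · rcases key2 w u (Ne.symm hne) hvh with ⟨hur, rfl⟩ | ⟨j, hj, rfl, rfl⟩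
          · exact (hadj _ _).mpr (Or.inl (par_adj hT hur).symm)
          · refine (hadj _ _).mpr (Or.inr ⟨⟨⟨j, by omega⟩, by simpa using hj, ?_⟩, hne⟩)
            rfl
      · intro hadjuw
        rcases (hadj u w).mp hadjuw with h | ⟨⟨i, hik, he⟩, hne2⟩
        · rcases (adj_iff_par hT).mp h with ⟨h1, h2⟩ | ⟨h1, h2⟩
          · exact ⟨(X u, Y w), by rw [← h2]; exact key4 u _ (key3a u h1)⟩
          · obtain ⟨p, hp1, hp2⟩ : ((LShape (X w) (Y w) (A w) (B w)) ∩
              (LShape (X u) (Y u) (A u) (B u))).Nonempty :=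
              ⟨(X w, Y u), by rw [← h2]; exact key4 w _ (key3a w h1)⟩
            exact ⟨p, hp2, hp1⟩
        · rw [Sym2.eq_iff] at he
          rcases he with ⟨rfl, rfl⟩ | ⟨rfl, rfl⟩
          · obtain ⟨hp1, hp2⟩ := key4 _ _ (key3b (i : ℕ) hik)
            exact ⟨_, hp2, hp1⟩
          · obtain ⟨hp1, hp2⟩ := key4 _ _ (key3b (i : ℕ) hik)
            exact ⟨_, hp1, hp2⟩
    · intro p hp q hq
      rcases key1 u w hne p hp.1 hp.2 with ⟨hvh1, rfl⟩ | ⟨hvh1, rfl⟩ <;>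
        rcases key1 u w hne q hq.1 hq.2 with ⟨hvh2, rfl⟩ | ⟨hvh2, rfl⟩
      · rfl
      · exact absurd (key5 u w hne hvh1 hvh2) not_false
      · exact absurd (key5 u w hne hvh2 hvh1) not_false
      · rfl
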